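/- arXiv:math/0410115 — 4 statements merged into one kernel-verified Lean document; each statement's English description precedes it below -/
import Mathlib

section
/- Let u be a utility function. Then the asymptotic elasticity AE(u) = limsup_{x→∞} x·u'(x)/u(x) satisfies: AE(u) ∈ [0,1] if u(∞) = ∞; AE(u) = 0 if 0 < u(∞) < ∞; and AE(u) ∈ [−∞, 0] if −∞ < u(∞) ≤ 0. -/
open MeasureTheory Filter Set Topology
open scoped ENNReal

noncomputable section

/-- A utility function: strictly concave, strictly increasing, continuously
differentiable on `(0,∞)`, with `u'(0+) = ∞` and `u'(∞) = 0`. -/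
def IsUtility (u : ℝ → ℝ) : Prop :=
  StrictConcaveOn ℝ (Set.Ioi 0) u ∧
  StrictMonoOn u (Set.Ioi 0) ∧
  (∀ x ∈ Set.Ioi (0:ℝ), DifferentiableAt ℝ u x) ∧
  ContinuousOn (deriv u) (Set.Ioi 0) ∧
  Tendsto (deriv u) (nhdsWithin 0 (Set.Ioi 0)) atTop ∧
  Tendsto (deriv u) atTop (nhds 0)

/-- The convex dual `u*(y) = sup_{x>0} (u x - y x)`. -/
def ustar (u : ℝ → ℝ) (y : ℝ) : ℝ := sSup ((fun x => u x - y * x) '' Set.Ioi 0)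

/-- `u(∞) = lim_{x→∞} u x`, as an extended real (supremum over `x > 0`). -/
def uTop (u : ℝ → ℝ) : EReal := ⨆ x ∈ Set.Ioi (0:ℝ), (u x : EReal)

/-- Asymptotic elasticity `AE(u) = limsup_{x→∞} x u'(x) / u(x)` (in `EReal`). -/
def AEu (u : ℝ → ℝ) : EReal :=
  Filter.limsup (fun x : ℝ => ((x * deriv u x / u x : ℝ) : EReal)) Filter.atTop

variable {Ω : Type*} [MeasurableSpace Ω]

/-- An extended-real-valued integral: positive part minus negative part. -/
def eInt (μ : Measure Ω) (g : Ω → ℝ) : EReal :=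
  ((∫⁻ x, ENNReal.ofReal (g x) ∂μ : ℝ≥0∞) : EReal)
    - ((∫⁻ x, ENNReal.ofReal (-(g x)) ∂μ : ℝ≥0∞) : EReal)

/-- `f` is a density on `(Ω, Σ, μ)`. -/
def IsDensity (μ : Measure Ω) (f : Ω → ℝ) : Prop :=
  Measurable f ∧ (∀ x, 0 ≤ f x) ∧ Integrable f μ ∧ ∫ x, f x ∂μ = 1

/-- The admissible class `A(f)`: densities `w` with `u(w)⁻ ∈ L¹(fμ)`. -/
def Adm (μ : Measure Ω) (u : ℝ → ℝ) (f : Ω → ℝ) : Set (Ω → ℝ) :=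
  {w | IsDensity μ w ∧ Integrable (fun x => max (-(u (w x))) 0 * f x) μ}

/-- `N_u(f) = sup_{w ∈ A(f)} ∫ u(w) f dμ`, valued in `EReal`. -/
def Nu (μ : Measure Ω) (u : ℝ → ℝ) (f : Ω → ℝ) : EReal :=
  ⨆ w ∈ Adm μ u f, eInt μ (fun x => u (w x) * f x)

/-- The utility maximizing entropy `H_u(f) = ln u⁻¹(N_u(f))`, valued in `[0,∞]`;
it is `⊤` when `N_u(f)` is not dominated by any value `u x`, `x > 0`. -/
def Hu (μ : Measure Ω) (u : ℝ → ℝ) (f : Ω → ℝ) : EReal :=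
  sInf {y : EReal | ∃ x : ℝ, 0 < x ∧ Nu μ u f ≤ (u x : EReal) ∧ y = (Real.log x : EReal)}

/-! The elasticity `x u'(x) / u(x)` is controlled by concavity: for `0 < a < x`, the tangent slope
`u'(x)` is at most the chord slope `(u x - u a) / (x - a)`, so where `u x > 0`
`x u'(x) / u(x) ≤ x / (x - a) · (1 - u a / u x)`.
With `a = 1` the right side tends to `1` when `u(∞) = ∞`; with `a = x / 2` it is
`2 (u x - u (x/2)) / u x`, which tends to `0` when `u(∞)` is finite and positive.
Monotonicity gives `u' ≥ 0`, so the sign of the elasticity is the sign of `u`, which settles the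
lower bounds and the case `u(∞) ≤ 0`. -/

lemma tendsto_div_sub_const_atTop (a : ℝ) :
    Tendsto (fun x : ℝ => x / (x - a)) atTop (𝓝 1) := by
  have hinv : Tendsto (fun x : ℝ => 1 + a * (x - a)⁻¹) atTop (𝓝 (1 + a * 0)) :=
    tendsto_const_nhds.add <| tendsto_const_nhds.mul <|
      tendsto_inv_atTop_zero.comp (tendsto_atTop_add_const_right atTop (-a) tendsto_id)
  rw [mul_zero, add_zero] at hinv
  refine hinv.congr' ?_
  filter_upwards [eventually_gt_atTop a] with x hx
  field_simp [(sub_pos.2 hx).ne']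
  ring

lemma MonotoneOn.le_of_tendsto_atTop {u : ℝ → ℝ} {a L : ℝ} (hmono : MonotoneOn u (Ioi a))
    (hL : Tendsto u atTop (𝓝 L)) {x : ℝ} (hx : a < x) : u x ≤ L :=
  ge_of_tendsto hL <| (eventually_ge_atTop x).mono fun _ hy => hmono hx (hx.trans_le hy) hy

lemma AEu_le_of_eventually_le {u g : ℝ → ℝ} {c : ℝ} (hg : Tendsto g atTop (𝓝 c))
    (h : ∀ᶠ x in atTop, x * deriv u x / u x ≤ g x) : AEu u ≤ c :=
  calc AEu u ≤ limsup (fun x => (g x : EReal)) atTop :=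
        limsup_le_limsup (h.mono fun _ hx => EReal.coe_le_coe_iff.2 hx)
    _ = c := (EReal.tendsto_coe.2 hg).limsup_eq

lemma le_AEu_of_eventually_le {u : ℝ → ℝ} {c : ℝ}
    (h : ∀ᶠ x in atTop, c ≤ x * deriv u x / u x) : (c : EReal) ≤ AEu u :=
  le_limsup_of_frequently_le (h.mono fun _ hx => EReal.coe_le_coe_iff.2 hx).frequently

section Elasticity

variable {u : ℝ → ℝ} {x : ℝ}

lemma MonotoneOn.deriv_nonneg_of_isOpen {s : Set ℝ} (hmono : MonotoneOn u s) (hs : IsOpen s)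
    (hx : x ∈ s) : 0 ≤ deriv u x :=
  derivWithin_of_isOpen (f := u) hs hx ▸ hmono.derivWithin_nonneg

lemma elasticity_nonneg (hmono : MonotoneOn u (Ioi 0)) (hx : 0 < x) (hux : 0 ≤ u x) :
    0 ≤ x * deriv u x / u x :=
  div_nonneg (mul_nonneg hx.le (hmono.deriv_nonneg_of_isOpen isOpen_Ioi hx)) hux

lemma elasticity_nonpos (hmono : MonotoneOn u (Ioi 0)) (hx : 0 < x) (hux : u x ≤ 0) :
    x * deriv u x / u x ≤ 0 :=
  div_nonpos_of_nonneg_of_nonpos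
    (mul_nonneg hx.le (hmono.deriv_nonneg_of_isOpen isOpen_Ioi hx)) hux

lemma elasticity_le_of_concaveOn (hconc : ConcaveOn ℝ (Ioi 0) u)
    (hdiff : DifferentiableAt ℝ u x) {a : ℝ} (ha : 0 < a) (hax : a < x) (hux : 0 < u x) :
    x * deriv u x / u x ≤ x / (x - a) * ((u x - u a) / u x) := by
  have hslope : deriv u x ≤ (u x - u a) / (x - a) := by
    simpa only [slope_def_field] using hconc.deriv_le_slope ha (ha.trans hax) hax hdiff
  calc x * deriv u x / u x ≤ x * ((u x - u a) / (x - a)) / u x := by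
        gcongr
        linarith
    _ = x / (x - a) * ((u x - u a) / u x) := by ring

theorem AEu_mem_Icc_of_tendsto_atTop (hconc : ConcaveOn ℝ (Ioi 0) u)
    (hmono : MonotoneOn u (Ioi 0)) (hdiff : ∀ x ∈ Ioi (0 : ℝ), DifferentiableAt ℝ u x)
    (htop : Tendsto u atTop atTop) : AEu u ∈ Icc (0 : EReal) 1 := by
  have hpos : ∀ᶠ x in atTop, 0 < u x := htop.eventually_gt_atTop 0
  have hratio : Tendsto (fun x => 1 - u 1 / u x) atTop (𝓝 1) := by
    simpa using tendsto_const_nhds.sub (tendsto_const_nhds.div_atTop htop)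
  have hlim : Tendsto (fun x => x / (x - 1) * (1 - u 1 / u x)) atTop (𝓝 1) := by
    simpa using (tendsto_div_sub_const_atTop 1).mul hratio
  refine ⟨mod_cast le_AEu_of_eventually_le ?_, mod_cast AEu_le_of_eventually_le hlim ?_⟩
  · filter_upwards [hpos, eventually_gt_atTop 0] with x hux hx
    exact elasticity_nonneg hmono hx hux.le
  · filter_upwards [hpos, eventually_gt_atTop 1] with x hux hx
    have hdiv : (u x - u 1) / u x = 1 - u 1 / u x := by field_simp
    simpa only [hdiv] using
      elasticity_le_of_concaveOn hconc (hdiff x (one_pos.trans hx)) one_pos hx hux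

theorem AEu_eq_zero_of_tendsto_pos (hconc : ConcaveOn ℝ (Ioi 0) u)
    (hmono : MonotoneOn u (Ioi 0)) (hdiff : ∀ x ∈ Ioi (0 : ℝ), DifferentiableAt ℝ u x)
    {L : ℝ} (hL : Tendsto u atTop (𝓝 L)) (hL0 : 0 < L) : AEu u = 0 := by
  have hpos : ∀ᶠ x in atTop, 0 < u x := hL.eventually (lt_mem_nhds hL0)
  have hhalf : Tendsto (fun x => u (x / 2)) atTop (𝓝 L) :=
    hL.comp (tendsto_id.atTop_div_const two_pos)
  have hlim : Tendsto (fun x => 2 * ((u x - u (x / 2)) / u x)) atTop (𝓝 0) := by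
    simpa using ((hL.sub hhalf).div hL hL0.ne').const_mul 2
  refine le_antisymm (mod_cast AEu_le_of_eventually_le hlim ?_)
    (mod_cast le_AEu_of_eventually_le ?_)
  · filter_upwards [hpos, eventually_gt_atTop 0] with x hux hx
    have hdiv : x / (x - x / 2) = 2 := by field_simp; ring
    simpa only [hdiv] using
      elasticity_le_of_concaveOn hconc (hdiff x hx) (half_pos hx) (half_lt_self hx) hux
  · filter_upwards [hpos, eventually_gt_atTop 0] with x hux hx
    exact elasticity_nonneg hmono hx hux.le

theorem AEu_nonpos_of_tendsto_nonpos (hmono : MonotoneOn u (Ioi 0)) {L : ℝ}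
    (hL : Tendsto u atTop (𝓝 L)) (hL0 : L ≤ 0) : AEu u ≤ 0 :=
  mod_cast AEu_le_of_eventually_le tendsto_const_nhds <|
    (eventually_gt_atTop 0).mono fun _ hx =>
      elasticity_nonpos hmono hx ((hmono.le_of_tendsto_atTop hL hx).trans hL0)

end Elasticity

/-- the range of the asymptotic elasticity depends on `u(∞)`. -/
theorem asymptotic_elasticity_range (u : ℝ → ℝ) (hu : IsUtility u) :
    (Tendsto u atTop atTop → AEu u ∈ Set.Icc (0 : EReal) 1) ∧
    (∀ L : ℝ, Tendsto u atTop (nhds L) → 0 < L → AEu u = 0) ∧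
    (∀ L : ℝ, Tendsto u atTop (nhds L) → L ≤ 0 → AEu u ≤ 0) := by
  obtain ⟨hconc, hmono, hdiff, -⟩ := hu
  exact ⟨AEu_mem_Icc_of_tendsto_atTop hconc.concaveOn hmono.monotoneOn hdiff,
    fun _ hL hL0 => AEu_eq_zero_of_tendsto_pos hconc.concaveOn hmono.monotoneOn hdiff hL hL0,
    fun _ hL hL0 => AEu_nonpos_of_tendsto_nonpos hmono.monotoneOn hL hL0⟩

end
end

section
/- Let u be a utility function with u(∞) > 0 and AE(u) < γ < 1. Then there exists x₀ > 0 such that 0 < u(λx) ≤ λ^γ · u(x) for all λ ≥ 1 and all x ≥ x₀. -/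
open MeasureTheory Filter Set Topology
open scoped ENNReal

noncomputable section

variable {Ω : Type*} [MeasurableSpace Ω]

/-! Since `u` is increasing and somewhere positive, it is eventually positive, so `AE(u) < γ`
gives `x u'(x) < γ u(x)` for large `x`. This says that `x ↦ u(x) / x^γ` is nonincreasing there,
and comparing its values at `x` and `λx` gives the bound. -/

section ElasticityBound

variable {f : ℝ → ℝ} {γ a : ℝ}

theorem antitoneOn_div_rpow_of_mul_deriv_le (ha : 0 < a)
    (hf : ∀ s ∈ Ici a, DifferentiableAt ℝ f s) (hγ : ∀ s ∈ Ioi a, s * deriv f s ≤ γ * f s) :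
    AntitoneOn (fun s => f s / s ^ γ) (Ici a) := by
  have hderiv : ∀ s ∈ Ici a, HasDerivAt (fun s => f s / s ^ γ)
      ((deriv f s * s ^ γ - f s * (γ * s ^ (γ - 1))) / (s ^ γ) ^ 2) s := fun s hs =>
    have hs0 : 0 < s := ha.trans_le hs
    (hf s hs).hasDerivAt.div (Real.hasDerivAt_rpow_const (Or.inl hs0.ne'))
      (Real.rpow_pos_of_pos hs0 γ).ne'
  refine antitoneOn_of_deriv_nonpos (convex_Ici a)
    (fun s hs => (hderiv s hs).continuousAt.continuousWithinAt)
    (fun s hs => (hderiv s (interior_subset hs)).differentiableAt.differentiableWithinAt)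
    fun s hs => ?_
  rw [interior_Ici] at hs
  have hs0 : 0 < s := ha.trans hs
  rw [(hderiv s (mem_Ici.2 (le_of_lt hs))).deriv]
  refine div_nonpos_of_nonpos_of_nonneg ?_ (sq_nonneg _)
  have hpow : s ^ γ = s ^ (γ - 1) * s := by
    rw [← Real.rpow_add_one hs0.ne']; ring_nf
  calc deriv f s * s ^ γ - f s * (γ * s ^ (γ - 1))
      = s ^ (γ - 1) * (s * deriv f s - γ * f s) := by rw [hpow]; ring
    _ ≤ 0 := mul_nonpos_of_nonneg_of_nonpos (Real.rpow_pos_of_pos hs0 _).le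
        (sub_nonpos.2 (hγ s hs))

theorem le_rpow_mul_of_mul_deriv_le (ha : 0 < a)
    (hf : ∀ s ∈ Ici a, DifferentiableAt ℝ f s) (hγ : ∀ s ∈ Ioi a, s * deriv f s ≤ γ * f s)
    {lam x : ℝ} (hlam : 1 ≤ lam) (hx : a ≤ x) :
    f (lam * x) ≤ lam ^ γ * f x := by
  have hx0 : 0 < x := ha.trans_le hx
  have hlam0 : 0 < lam := one_pos.trans_le hlam
  have hanti := antitoneOn_div_rpow_of_mul_deriv_le ha hf hγ (mem_Ici.2 hx)
    (mem_Ici.2 (hx.trans (le_mul_of_one_le_left hx0.le hlam))) (le_mul_of_one_le_left hx0.le hlam)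
  simp only [Real.mul_rpow hlam0.le hx0.le] at hanti
  rwa [← div_div, div_le_iff₀ (Real.rpow_pos_of_pos hx0 γ), div_mul_cancel₀ _
    (Real.rpow_pos_of_pos hx0 γ).ne', div_le_iff₀' (Real.rpow_pos_of_pos hlam0 γ)] at hanti

end ElasticityBound

theorem eventually_pos_of_monotoneOn {u : ℝ → ℝ} (hmono : MonotoneOn u (Ioi 0))
    (hpos : ∃ x > (0:ℝ), 0 < u x) : ∀ᶠ x in atTop, 0 < u x := by
  obtain ⟨a, ha, hua⟩ := hpos
  filter_upwards [eventually_ge_atTop a] with x hx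
  exact hua.trans_le (hmono ha (ha.trans_le hx) hx)

theorem eventually_mul_deriv_lt_of_AEu_lt {u : ℝ → ℝ} {γ : ℝ} (hAE : AEu u < (γ : EReal))
    (hpos : ∀ᶠ x in atTop, 0 < u x) : ∀ᶠ x in atTop, x * deriv u x < γ * u x := by
  filter_upwards [eventually_lt_of_limsup_lt hAE, hpos] with x hx hux
  rw [← div_lt_iff₀ hux]
  exact_mod_cast hx

theorem asymptotic_elasticity_growth_general (u : ℝ → ℝ) (γ : ℝ) (hu : IsUtility u)
    (hpos : ∃ x > (0:ℝ), 0 < u x) (hAE : AEu u < (γ : EReal)) :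
    ∃ x₀ > (0:ℝ), ∀ lam ≥ (1:ℝ), ∀ x ≥ x₀,
      0 < u (lam * x) ∧ u (lam * x) ≤ lam ^ γ * u x := by
  obtain ⟨-, hmono, hdiff, -⟩ := hu
  have hupos := eventually_pos_of_monotoneOn hmono.monotoneOn hpos
  obtain ⟨x₀, hx₀⟩ := eventually_atTop.1 <|
    (eventually_gt_atTop 0).and (hupos.and (eventually_mul_deriv_lt_of_AEu_lt hAE hupos))
  have hx₀pos : 0 < x₀ := (hx₀ x₀ le_rfl).1
  refine ⟨x₀, hx₀pos, fun lam hlam x hx => ⟨?_, ?_⟩⟩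
  · exact (hx₀ _ (hx.trans (le_mul_of_one_le_left (hx₀pos.trans_le hx).le hlam))).2.1
  · exact le_rpow_mul_of_mul_deriv_le hx₀pos (fun s hs => hdiff s (hx₀pos.trans_le hs))
      (fun s hs => (hx₀ s (le_of_lt hs)).2.2.le) hlam hx

/-- if `u(∞) > 0` and `AE(u) < γ < 1`, then there is `x₀ > 0` with
`0 < u(λ x) ≤ λ^γ u(x)` for all `λ ≥ 1` and `x ≥ x₀`. -/
theorem asymptotic_elasticity_growth (u : ℝ → ℝ) (γ : ℝ) (hu : IsUtility u)
    (hpos : ∃ x > (0:ℝ), 0 < u x) (hAE : AEu u < (γ : EReal)) (hγ : γ < 1) :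
    ∃ x₀ > (0:ℝ), ∀ lam ≥ (1:ℝ), ∀ x ≥ x₀,
      0 < u (lam * x) ∧ u (lam * x) ≤ lam ^ γ * u x :=
  asymptotic_elasticity_growth_general u γ hu hpos hAE

end
end

section
/- Let u be a utility function, f₁, f₂ densities on a probability space (Ω, Σ, μ), and a ∈ [0,1]. Then N_u(a f₁ + (1−a) f₂) ≤ a·N_u(f₁) + (1−a)·N_u(f₂); i.e., N_u is convex on densities. -/
open MeasureTheory Filter Set Topology
open scoped ENNReal

noncomputable section

variable {Ω : Type*} [MeasurableSpace Ω]

/-!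
If `w` is admissible for `a f₁ + b f₂` with `a, b > 0`, it is admissible for `f₁` and `f₂`,
since each `fᵢ` is dominated by a multiple of `a f₁ + b f₂`. The integrand then splits as
`a u(w) f₁ + b u(w) f₂`, two terms of the same sign at every point, so their positive and
negative parts add separately and the extended integral is additive on them, with no
finiteness assumption. Taking suprema gives `N_u(a f₁ + b f₂) ≤ a N_u(f₁) + b N_u(f₂)`; the
endpoints `a = 0, 1` are trivial.
-/

namespace ENNReal

theorem ofReal_add_of_mul_nonneg {x y : ℝ} (h : 0 ≤ x * y) :
    ENNReal.ofReal (x + y) = ENNReal.ofReal x + ENNReal.ofReal y := by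
  rcases mul_nonneg_iff.1 h with ⟨hx, hy⟩ | ⟨hx, hy⟩
  · exact ENNReal.ofReal_add hx hy
  · simp [ENNReal.ofReal_of_nonpos, hx, hy, add_nonpos hx hy]

end ENNReal

section

variable {μ : Measure Ω}

theorem eInt_add {g₁ g₂ : Ω → ℝ} (hg₁ : Measurable g₁)
    (hsign : ∀ x, 0 ≤ g₁ x * g₂ x) :
    eInt μ (fun x => g₁ x + g₂ x) = eInt μ g₁ + eInt μ g₂ := by
  have hsign' : ∀ x, 0 ≤ -g₁ x * -g₂ x := fun x => by simpa only [neg_mul_neg] using hsign x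
  simp only [eInt, neg_add, ENNReal.ofReal_add_of_mul_nonneg (hsign _),
    ENNReal.ofReal_add_of_mul_nonneg (hsign' _)]
  rw [lintegral_add_left hg₁.ennreal_ofReal, lintegral_add_left (by fun_prop),
    EReal.coe_ennreal_add, EReal.coe_ennreal_add,
    EReal.add_sub_add_comm (.inl (EReal.coe_ennreal_ne_bot _)) (.inr (EReal.coe_ennreal_ne_bot _))]

theorem eInt_const_mul {c : ℝ} (hc : 0 ≤ c) {g : Ω → ℝ} (hg : Measurable g) :
    eInt μ (fun x => c * g x) = c * eInt μ g := by
  simp only [eInt, ← mul_neg, ENNReal.ofReal_mul hc]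
  rw [lintegral_const_mul _ hg.ennreal_ofReal, lintegral_const_mul _ (by fun_prop),
    EReal.coe_ennreal_mul, EReal.coe_ennreal_mul, EReal.coe_ennreal_ofReal, max_eq_left hc,
    EReal.mul_sub_of_nonneg_of_ne_top (EReal.coe_nonneg.2 hc) (EReal.coe_ne_top c)]

theorem ContinuousOn.measurable_comp_of_nonneg {u : ℝ → ℝ} (hu : ContinuousOn u (Ioi 0))
    {w : Ω → ℝ} (hw : Measurable w) (hw0 : ∀ x, 0 ≤ w x) : Measurable fun x => u (w x) := by
  classical
  have hv : Measurable ((Ioi (0 : ℝ)).piecewise u fun _ => u 0) :=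
    hu.measurable_piecewise continuousOn_const measurableSet_Ioi
  convert hv.comp hw using 1
  funext x
  rcases (hw0 x).eq_or_lt with h | h
  · simp [← h]
  · simp [h]

theorem mem_Adm_of_le_const_mul {u : ℝ → ℝ} {f g w : Ω → ℝ} {c : ℝ} (hw : w ∈ Adm μ u f)
    (huw : Measurable fun x => u (w x)) (hg : Measurable g) (hg0 : ∀ x, 0 ≤ g x)
    (hgf : ∀ x, g x ≤ c * f x) : w ∈ Adm μ u g := by
  refine ⟨hw.1, (hw.2.const_mul c).mono'
    ((huw.neg.max measurable_const).mul hg).aestronglyMeasurable (.of_forall fun x => ?_)⟩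
  have hneg : 0 ≤ max (-u (w x)) 0 := le_max_right _ _
  rw [Real.norm_of_nonneg (mul_nonneg hneg (hg0 x))]
  calc max (-u (w x)) 0 * g x ≤ max (-u (w x)) 0 * (c * f x) := by gcongr; exact hgf x
    _ = c * (max (-u (w x)) 0 * f x) := by ring

theorem le_Nu {u : ℝ → ℝ} {f w : Ω → ℝ} (hw : w ∈ Adm μ u f) :
    eInt μ (fun x => u (w x) * f x) ≤ Nu μ u f :=
  le_iSup₂ (f := fun w _ => eInt μ fun x => u (w x) * f x) w hw

theorem Nu_add_le {u : ℝ → ℝ} (hu : ContinuousOn u (Ioi 0)) {f₁ f₂ : Ω → ℝ}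
    (hf₁ : Measurable f₁) (hf₂ : Measurable f₂) (hf₁0 : ∀ x, 0 ≤ f₁ x) (hf₂0 : ∀ x, 0 ≤ f₂ x)
    {a b : ℝ} (ha : 0 < a) (hb : 0 < b) :
    Nu μ u (fun x => a * f₁ x + b * f₂ x) ≤ (a : EReal) * Nu μ u f₁ + (b : EReal) * Nu μ u f₂ := by
  refine iSup₂_le fun w hw => ?_
  have huw : Measurable fun x => u (w x) := hu.measurable_comp_of_nonneg hw.1.1 hw.1.2.1
  have hw₁ : w ∈ Adm μ u f₁ := mem_Adm_of_le_const_mul hw huw hf₁ hf₁0 (c := a⁻¹) fun x => by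
    rw [mul_add, inv_mul_cancel_left₀ ha.ne']
    exact le_add_of_nonneg_right (by have := hf₂0 x; positivity)
  have hw₂ : w ∈ Adm μ u f₂ := mem_Adm_of_le_const_mul hw huw hf₂ hf₂0 (c := b⁻¹) fun x => by
    rw [mul_add, inv_mul_cancel_left₀ hb.ne']
    exact le_add_of_nonneg_left (by have := hf₁0 x; positivity)
  have hsign : ∀ x, 0 ≤ a * (u (w x) * f₁ x) * (b * (u (w x) * f₂ x)) := fun x => by
    have h : a * (u (w x) * f₁ x) * (b * (u (w x) * f₂ x))
        = a * b * u (w x) ^ 2 * (f₁ x * f₂ x) := by ring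
    rw [h]
    exact mul_nonneg (by positivity) (mul_nonneg (hf₁0 x) (hf₂0 x))
  have hg₁ : Measurable fun x => u (w x) * f₁ x := huw.mul hf₁
  have hg₂ : Measurable fun x => u (w x) * f₂ x := huw.mul hf₂
  calc eInt μ (fun x => u (w x) * (a * f₁ x + b * f₂ x))
      = eInt μ (fun x => a * (u (w x) * f₁ x) + b * (u (w x) * f₂ x)) := by
        congr 1; funext x; ring
    _ = a * eInt μ (fun x => u (w x) * f₁ x) + b * eInt μ (fun x => u (w x) * f₂ x) := by
        rw [eInt_add (hg₁.const_mul a) hsign, eInt_const_mul ha.le hg₁, eInt_const_mul hb.le hg₂]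
    _ ≤ a * Nu μ u f₁ + b * Nu μ u f₂ := by
        gcongr
        · exact le_Nu hw₁
        · exact le_Nu hw₂

end

theorem IsUtility.continuousOn {u : ℝ → ℝ} (hu : IsUtility u) : ContinuousOn u (Ioi 0) :=
  fun x hx => (hu.2.2.1 x hx).continuousAt.continuousWithinAt

theorem Nu_convex_general (μ : Measure Ω)
    (u : ℝ → ℝ) (f₁ f₂ : Ω → ℝ) (a : ℝ) (hu : IsUtility u)
    (hf₁ : IsDensity μ f₁) (hf₂ : IsDensity μ f₂) (ha : a ∈ Set.Icc (0:ℝ) 1) :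
    Nu μ u (fun x => a * f₁ x + (1 - a) * f₂ x)
      ≤ (a : EReal) * Nu μ u f₁ + ((1 - a : ℝ) : EReal) * Nu μ u f₂ := by
  rcases ha.1.eq_or_lt with rfl | ha0
  · simp
  rcases ha.2.eq_or_lt with rfl | ha1
  · simp
  exact Nu_add_le hu.continuousOn hf₁.1 hf₂.1 hf₁.2.1 hf₂.2.1 ha0 (sub_pos.2 ha1)

/-- convexity of `N_u` on densities. -/
theorem Nu_convex (μ : Measure Ω) [IsProbabilityMeasure μ]
    (u : ℝ → ℝ) (f₁ f₂ : Ω → ℝ) (a : ℝ) (hu : IsUtility u)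
    (hf₁ : IsDensity μ f₁) (hf₂ : IsDensity μ f₂) (ha : a ∈ Set.Icc (0:ℝ) 1) :
    Nu μ u (fun x => a * f₁ x + (1 - a) * f₂ x)
      ≤ (a : EReal) * Nu μ u f₁ + ((1 - a : ℝ) : EReal) * Nu μ u f₂ :=
  Nu_convex_general μ u f₁ f₂ a hu hf₁ hf₂ ha

end
end

section
/- Let u be a utility function with u(1) = 0 and let (fₙ) be a sequence of densities on a probability space (Ω, Σ, μ). If N_u(fₙ) → 0 as n → ∞, then fₙ → 1 in L¹(μ). -/
open MeasureTheory Filter Set Topology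
open scoped ENNReal

noncomputable section

variable {Ω : Type*} [MeasurableSpace Ω]

/-! If `‖f - 1‖₁ ≥ δ`, put `A = {f > 1}`, `t = μ A` and `P = ∫_A f`, so that
`P - t = ‖f - 1‖₁ / 2 ≥ δ / 2`. Testing `N_u(f)` against the two-valued density `w = 1 + ε` on `A`,
`w = 1 - ε t / (1 - t)` off `A`, concavity of `u` gives
`∫ u(w) f ≥ (δ/2) u(1+ε) + min(0, u(1+ε) + (δ/2) u(1 - 2ε/δ))`, which is `(δ/2) u'(1) ε + o(ε) > 0`.
So `N_u` is bounded away from `0` on `{f : ‖f - 1‖₁ ≥ δ}`. -/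

lemma IsUtility.deriv_pos {u : ℝ → ℝ} (hu : IsUtility u) {x : ℝ} (hx : 0 < x) :
    0 < deriv u x := by
  have hx1 : x < x + 1 := lt_add_one x
  have hy : x + 1 ∈ Ioi (0 : ℝ) := hx.trans hx1
  have hslope : 0 < slope u x (x + 1) := by
    rw [slope_def_field]
    exact div_pos (sub_pos.2 (hu.2.1 hx hy hx1)) (by linarith)
  exact hslope.trans_le (hu.1.concaveOn.slope_le_deriv hx hy hx1 (hu.2.2.1 x hx))

lemma ConcaveOn.le_of_hasDerivAt_nonneg {s : Set ℝ} {u : ℝ → ℝ} {x y d : ℝ}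
    (hu : ConcaveOn ℝ s u) (hx : x ∈ s) (hy : y ∈ s) (hxy : x ≤ y) (hd : HasDerivAt u d y)
    (hd0 : 0 ≤ d) : u x ≤ u y := by
  rcases hxy.eq_or_lt with rfl | hxy
  · rfl
  have hslope := hd0.trans (hu.le_slope_of_hasDerivAt hx hy hxy hd)
  rwa [slope_def_field, le_div_iff₀ (sub_pos.2 hxy), zero_mul, sub_nonneg] at hslope

lemma le_two_point_value {u : ℝ → ℝ} {d r ε t P : ℝ} (hu : ConcaveOn ℝ (Ioi 0) u)
    (hu1 : u 1 = 0) (hd : HasDerivAt u d 1) (hd0 : 0 ≤ d) (hε : 0 < ε) (hεr : ε < r)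
    (hua : 0 ≤ u (1 + ε)) (ht : 0 ≤ t) (hPt : r ≤ P - t) (hP : P ≤ 1) :
    r * u (1 + ε) + min 0 (u (1 + ε) + r * u (1 - ε / r))
      ≤ u (1 + ε) * P + u (1 - ε * t / (1 - t)) * (1 - P) := by
  have hr : 0 < r := hε.trans hεr
  have ht1 : 0 < 1 - t := by linarith
  set p := 1 - ε / r with hp_def
  set b := 1 - ε * t / (1 - t) with hb_def
  set l := t * r / (1 - t) with hl_def
  have hp : 0 < p := by rw [hp_def, sub_pos, div_lt_one hr]; exact hεr
  have hl0 : 0 ≤ l := by positivity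
  have hl1 : l ≤ 1 := by rw [hl_def, div_le_one ht1]; nlinarith
  have hb : b = l * p + (1 - l) * 1 := by
    rw [hb_def, hl_def, hp_def]; field_simp; ring
  have hp1 : p ≤ 1 := by rw [hp_def]; linarith [div_pos hε hr]
  have hpb : p ≤ b := by rw [hb]; nlinarith [mul_nonneg (sub_nonneg.2 hl1) (sub_nonneg.2 hp1)]
  have hb1 : b ≤ 1 := by rw [hb]; nlinarith [mul_nonneg hl0 (sub_nonneg.2 hp1)]
  -- `b` lies on the chord from `p` to `1`, where `u` vanishes
  have hchord : l * u p ≤ u b := by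
    have := hu.2 hp (mem_Ioi.2 one_pos) hl0 (sub_nonneg.2 hl1) (add_sub_cancel l 1)
    rw [hb, mul_one]
    simpa [hu1] using this
  have hub : u b ≤ 0 :=
    hu1 ▸ hu.le_of_hasDerivAt_nonneg (hp.trans_le hpb) (mem_Ioi.2 one_pos) hb1 hd hd0
  have hchord' : t * r * u p ≤ u b * (1 - t) := by
    have hl : l * (1 - t) = t * r := by rw [hl_def]; field_simp
    calc t * r * u p = l * u p * (1 - t) := by rw [← hl]; ring
      _ ≤ u b * (1 - t) := mul_le_mul_of_nonneg_right hchord ht1.le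
  have hmin : min 0 (u (1 + ε) + r * u p) ≤ t * (u (1 + ε) + r * u p) := by
    rcases le_total 0 (u (1 + ε) + r * u p) with h | h
    · exact (min_le_left _ _).trans (mul_nonneg ht h)
    · exact (min_le_right _ _).trans (by nlinarith)
  nlinarith [mul_le_mul_of_nonneg_right hPt (by linarith : 0 ≤ u (1 + ε) - u b)]

lemma eventually_two_point_bound_pos {u : ℝ → ℝ} {d r : ℝ} (hd : HasDerivAt u d 1) (hd0 : 0 < d)
    (hu1 : u 1 = 0) (hr : 0 < r) :
    ∀ᶠ ε in 𝓝[>] 0, 0 < r * u (1 + ε) + min 0 (u (1 + ε) + r * u (1 - ε / r)) := by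
  have h₁ : HasDerivAt (fun z => u (1 + z)) d 0 :=
    HasDerivAt.comp_const_add 1 0 (by rwa [add_zero])
  have h₂ : HasDerivAt (fun z => u (1 - z / r)) (-d / r) 0 :=
    ((HasDerivAt.comp_const_sub (f := u) 1 (0 / r) (by rwa [zero_div, sub_zero])).comp 0
      ((hasDerivAt_id 0).div_const r)).congr_deriv (by ring)
  -- the first-order terms cancel in `u (1 + ε) + r * u (1 - ε / r)`
  have h₃ : HasDerivAt (fun z => u (1 + z) + r * u (1 - z / r)) 0 0 :=
    (h₁.add (h₂.const_mul r)).congr_deriv (by field_simp; ring)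
  have T₁ : Tendsto (fun ε => ε⁻¹ * u (1 + ε)) (𝓝[>] 0) (𝓝 d) := by
    simpa [hu1] using h₁.tendsto_slope_zero_right
  have T₃ : Tendsto (fun ε => ε⁻¹ * (u (1 + ε) + r * u (1 - ε / r))) (𝓝[>] 0) (𝓝 0) := by
    simpa [hu1] using h₃.tendsto_slope_zero_right
  have hlim := (T₁.const_mul r).add (tendsto_const_nhds (x := (0 : ℝ)).min T₃)
  rw [min_self, add_zero] at hlim
  filter_upwards [hlim.eventually_const_lt (mul_pos hr hd0), self_mem_nhdsWithin]
    with ε hε (hε0 : 0 < ε)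
  rw [← mul_zero ε⁻¹, ← mul_min_of_nonneg _ _ (inv_nonneg.2 hε0.le), mul_left_comm, ← mul_add]
    at hε
  exact lt_of_mul_lt_mul_left hε (inv_nonneg.2 hε0.le)

section

variable {μ : Measure Ω} {u : ℝ → ℝ} {f : Ω → ℝ}

lemma eInt_eq_integral {g : Ω → ℝ} (hg : Integrable g μ) :
    eInt μ g = ((∫ x, g x ∂μ : ℝ) : EReal) := by
  have hpos : ∫⁻ x, ENNReal.ofReal (g x) ∂μ ≠ ⊤ :=
    (lintegral_ofReal_le_lintegral_enorm g).trans_lt hg.hasFiniteIntegral |>.ne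
  have hneg : ∫⁻ x, ENNReal.ofReal (-g x) ∂μ ≠ ⊤ :=
    (lintegral_ofReal_le_lintegral_enorm (-g)).trans_lt hg.neg.hasFiniteIntegral |>.ne
  rw [integral_eq_lintegral_pos_part_sub_lintegral_neg_part hg, eInt, EReal.coe_sub,
    EReal.coe_ennreal_toReal hpos, EReal.coe_ennreal_toReal hneg]

lemma integral_le_Nu {w : Ω → ℝ} (hw : IsDensity μ w) (hf : ∀ x, 0 ≤ f x)
    (hint : Integrable (fun x => u (w x) * f x) μ) :
    ((∫ x, u (w x) * f x ∂μ : ℝ) : EReal) ≤ Nu μ u f := by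
  have hadm : w ∈ Adm μ u f := by
    refine ⟨hw, hint.neg.pos_part.congr (ae_of_all _ fun x => ?_)⟩
    simp only [max_mul_of_nonneg _ _ (hf x), neg_mul, zero_mul, Pi.neg_apply]
  rw [← eInt_eq_integral hint]
  exact le_iSup₂ (f := fun w _ => eInt μ fun x => u (w x) * f x) w hadm

lemma isDensity_piecewise [IsFiniteMeasure μ] {A : Set Ω} [DecidablePred (· ∈ A)]
    (hA : MeasurableSet A) {a b : ℝ} (ha : 0 ≤ a) (hb : 0 ≤ b)
    (hab : μ.real A * a + μ.real Aᶜ * b = 1) :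
    IsDensity μ (A.piecewise (fun _ => a) (fun _ => b)) := by
  refine ⟨measurable_const.piecewise hA measurable_const, fun x => ?_,
    Integrable.piecewise hA (integrable_const a).integrableOn (integrable_const b).integrableOn, ?_⟩
  · by_cases hx : x ∈ A <;> simp [hx, ha, hb]
  · rw [integral_piecewise hA (integrable_const a).integrableOn (integrable_const b).integrableOn,
      setIntegral_const, setIntegral_const, smul_eq_mul, smul_eq_mul, hab]

lemma two_point_value_le_Nu [IsFiniteMeasure μ] {A : Set Ω} (hA : MeasurableSet A) {a b : ℝ}
    (ha : 0 ≤ a) (hb : 0 ≤ b) (hab : μ.real A * a + μ.real Aᶜ * b = 1) (hf0 : ∀ x, 0 ≤ f x)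
    (hfi : Integrable f μ) :
    ((u a * ∫ x in A, f x ∂μ + u b * ∫ x in Aᶜ, f x ∂μ : ℝ) : EReal) ≤ Nu μ u f := by
  classical
  set w := A.piecewise (fun _ => a) (fun _ => b)
  have hw : (fun x => u (w x) * f x) = A.piecewise (fun x => u a * f x) (fun x => u b * f x) := by
    ext x
    by_cases hx : x ∈ A <;> simp [w, hx]
  have hA' := (hfi.const_mul (u a)).integrableOn (s := A)
  have hAc := (hfi.const_mul (u b)).integrableOn (s := Aᶜ)
  have hint : Integrable (fun x => u (w x) * f x) μ := hw ▸ Integrable.piecewise hA hA' hAc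
  have := integral_le_Nu (isDensity_piecewise hA ha hb hab) hf0 hint
  rwa [hw, integral_piecewise hA hA' hAc, integral_const_mul, integral_const_mul] at this

lemma integral_abs_sub_one_eq [IsProbabilityMeasure μ] (hf : IsDensity μ f) :
    ∫ x, |f x - 1| ∂μ = 2 * (∫ x in {x | 1 < f x}, f x ∂μ - μ.real {x | 1 < f x}) := by
  obtain ⟨hfm, -, hfi, hf1⟩ := hf
  set A := {x | 1 < f x}
  have hA : MeasurableSet A := measurableSet_lt measurable_const hfm
  have habs : (fun x => |f x - 1|) = fun x => 2 * A.indicator (fun x => f x - 1) x - (f x - 1) := by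
    ext x
    by_cases hx : 1 < f x
    · simp [A, hx, abs_of_pos (sub_pos.2 hx)]; ring
    · simp [A, hx, abs_of_nonpos (sub_nonpos.2 (not_lt.1 hx))]
  have hg : Integrable (fun x => f x - 1) μ := hfi.sub (integrable_const 1)
  rw [habs, integral_sub ((hg.indicator hA).const_mul 2) hg, integral_const_mul,
    integral_indicator hA, integral_sub hfi (integrable_const 1),
    integral_sub hfi.integrableOn (integrable_const 1).integrableOn, hf1, setIntegral_const]
  simp

lemma exists_pos_le_Nu_of_le_integral_abs_sub_one [IsProbabilityMeasure μ]
    (hu : ConcaveOn ℝ (Ioi 0) u) (hu1 : u 1 = 0) {d : ℝ} (hd : HasDerivAt u d 1) (hd0 : 0 < d)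
    {δ : ℝ} (hδ : 0 < δ) :
    ∃ c : ℝ, 0 < c ∧ ∀ f : Ω → ℝ, IsDensity μ f → δ ≤ ∫ x, |f x - 1| ∂μ →
      (c : EReal) ≤ Nu μ u f := by
  have hr : 0 < δ / 2 := half_pos hδ
  obtain ⟨ε, hc, hεδ, hε : 0 < ε⟩ := ((eventually_two_point_bound_pos hd hd0 hu1 hr).and
    ((eventually_nhdsWithin_of_eventually_nhds (eventually_lt_nhds hr)).and
      self_mem_nhdsWithin)).exists
  refine ⟨_, hc, fun f hf hdist => ?_⟩
  obtain ⟨hfm, hf0, hfi, hf1⟩ := hf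
  set A := {x | 1 < f x}
  set t := μ.real A
  set P := ∫ x in A, f x ∂μ
  have hA : MeasurableSet A := measurableSet_lt measurable_const hfm
  have hPt : δ / 2 ≤ P - t := by
    rw [integral_abs_sub_one_eq ⟨hfm, hf0, hfi, hf1⟩] at hdist; linarith
  have hP : P ≤ 1 := hf1 ▸ setIntegral_le_integral hfi (ae_of_all _ hf0)
  have hcompl : ∫ x in Aᶜ, f x ∂μ = 1 - P := by
    rw [← hf1, ← integral_add_compl hA hfi]; ring
  have ht : 0 < 1 - t := by linarith
  have hb : 0 ≤ 1 - ε * t / (1 - t) := by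
    rw [sub_nonneg, div_le_one ht]
    nlinarith [measureReal_nonneg (μ := μ) (s := A), hε]
  have hab : t * (1 + ε) + μ.real Aᶜ * (1 - ε * t / (1 - t)) = 1 := by
    rw [probReal_compl_eq_one_sub hA]; field_simp; ring
  have hua : 0 ≤ u (1 + ε) :=
    (pos_of_mul_pos_right (hc.trans_le (add_le_of_nonpos_right (min_le_left _ _))) hr.le).le
  calc (_ : EReal) ≤ ((u (1 + ε) * P + u (1 - ε * t / (1 - t)) * (1 - P) : ℝ) : EReal) :=
        EReal.coe_le_coe_iff.2 <| le_two_point_value hu hu1 hd hd0.le hε hεδ hua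
          measureReal_nonneg hPt hP
    _ ≤ Nu μ u f := by
        rw [← hcompl]
        exact two_point_value_le_Nu hA (by linarith) hb hab hf0 hfi

end

/-- if `u(1) = 0` and `N_u(fₙ) → 0`, then `fₙ → 1` in `L¹(μ)`. -/
theorem tendsto_one_of_Nu_tendsto_zero (μ : Measure Ω) [IsProbabilityMeasure μ]
    (u : ℝ → ℝ) (hu : IsUtility u) (hu1 : u 1 = 0)
    (f : ℕ → Ω → ℝ) (hf : ∀ n, IsDensity μ (f n))
    (hN : Tendsto (fun n => Nu μ u (f n)) atTop (nhds (0 : EReal))) :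
    Tendsto (fun n => ∫ x, |f n x - 1| ∂μ) atTop (nhds 0) := by
  have hd : HasDerivAt u (deriv u 1) 1 := (hu.2.2.1 1 (mem_Ioi.2 one_pos)).hasDerivAt
  refine tendsto_order.2 ⟨fun a ha => ?_, fun δ hδ => ?_⟩
  · exact Eventually.of_forall fun n => ha.trans_le (integral_nonneg fun _ => abs_nonneg _)
  · obtain ⟨c, hc, hle⟩ := exists_pos_le_Nu_of_le_integral_abs_sub_one (μ := μ)
      hu.1.concaveOn hu1 hd (hu.deriv_pos one_pos) hδ
    filter_upwards [hN.eventually_lt_const (EReal.coe_pos.2 hc)] with n hn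
    exact lt_of_not_ge fun h => (hle (f n) (hf n) h).not_gt hn

end
end
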